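/- Let n be a positive integer, let x, y_1, …, y_n be vectors in H, let c_1, …, c_n be complex numbers, and let p > 1 and q satisfy 1/p + 1/q = 1. Then |∑_{i=1}^n c_i (x, y_i)|^2 ≤ ‖x‖^2 · (∑_{i=1}^n |c_i|^p)^{1/p} · (∑_{i=1}^n |c_i|^q)^{1/q} · max_{1≤i≤n} (∑_{j=1}^n |(y_i, y_j)|). -/

import Mathlib

/-!
Write `∑ cᵢ (x, yᵢ) = (x, z)` with `z = ∑ cᵢ yᵢ`, apply Cauchy–Schwarz, and expand
`‖z‖² ≤ ∑ᵢⱼ |cᵢ| |cⱼ| |(yᵢ, yⱼ)|`. The Gram matrix `|(yᵢ, yⱼ)|` is symmetric, so its row and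
column sums are both bounded by their maximum, and the Schur test bounds the double sum by
`‖c‖_p ‖c‖_q max_i ∑ⱼ |(yᵢ, yⱼ)|`.
-/

open Finset

section SchurTest

variable {ι κ : Type*} [Fintype ι] [Fintype κ] {p q : ℝ} {a : ι → ℝ} {b : κ → ℝ}
  {A : ι → κ → ℝ}

/-- Hölder's inequality on `ι × κ`, after splitting each weight as `A = A ^ (1/p) * A ^ (1/q)`. -/
theorem Real.sum_sum_mul_mul_le_weighted_Lp_mul_Lq (hpq : p.HolderConjugate q)
    (ha : ∀ i, 0 ≤ a i) (hb : ∀ j, 0 ≤ b j) (hA : ∀ i j, 0 ≤ A i j) :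
    ∑ i, ∑ j, a i * b j * A i j ≤
      (∑ i, a i ^ p * ∑ j, A i j) ^ (1 / p) * (∑ j, b j ^ q * ∑ i, A i j) ^ (1 / q) := by
  have holder := Real.inner_le_Lp_mul_Lq_of_nonneg (univ : Finset (ι × κ))
    (f := fun w => a w.1 * A w.1 w.2 ^ (1 / p)) (g := fun w => b w.2 * A w.1 w.2 ^ (1 / q)) hpq
    (fun w _ => mul_nonneg (ha _) (Real.rpow_nonneg (hA _ _) _))
    (fun w _ => mul_nonneg (hb _) (Real.rpow_nonneg (hA _ _) _))
  have split_weight : ∀ i j,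
      a i * A i j ^ (1 / p) * (b j * A i j ^ (1 / q)) = a i * b j * A i j := fun i j => by
    rw [mul_mul_mul_comm, ← Real.rpow_add_of_nonneg (hA i j) (one_div_nonneg.2 hpq.nonneg)
      (one_div_nonneg.2 hpq.symm.nonneg), hpq.one_div_add_one_div, one_div_one, Real.rpow_one]
  have rpow_weight : ∀ {r : ℝ}, r ≠ 0 → ∀ (t : ℝ), 0 ≤ t → ∀ (s : ℝ), 0 ≤ s →
      (t * s ^ (1 / r)) ^ r = t ^ r * s := fun hr t ht s hs => by
    rw [Real.mul_rpow ht (Real.rpow_nonneg hs _), ← Real.rpow_mul hs, one_div_mul_cancel hr,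
      Real.rpow_one]
  simp only [Fintype.sum_prod_type, split_weight, rpow_weight hpq.ne_zero _ (ha _) _ (hA _ _),
    rpow_weight hpq.symm.ne_zero _ (hb _) _ (hA _ _)] at holder
  rw [Finset.sum_comm (f := fun i j => b j ^ q * A i j)] at holder
  simpa only [Finset.mul_sum] using holder

/-- The **Schur test**. -/
theorem Real.sum_sum_mul_mul_le_Lp_mul_Lq_mul (hpq : p.HolderConjugate q)
    (ha : ∀ i, 0 ≤ a i) (hb : ∀ j, 0 ≤ b j) (hA : ∀ i j, 0 ≤ A i j) {M : ℝ}
    (hrow : ∀ i, ∑ j, A i j ≤ M) (hcol : ∀ j, ∑ i, A i j ≤ M) :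
    ∑ i, ∑ j, a i * b j * A i j ≤
      (∑ i, a i ^ p) ^ (1 / p) * (∑ j, b j ^ q) ^ (1 / q) * M := by
  rcases isEmpty_or_nonempty ι with hι | ⟨⟨i₀⟩⟩
  · simp [hpq.ne_zero]
  have hM : 0 ≤ M := (sum_nonneg fun j _ => hA i₀ j).trans (hrow i₀)
  have hp := one_div_nonneg.2 hpq.nonneg
  have hq := one_div_nonneg.2 hpq.symm.nonneg
  have hap : 0 ≤ ∑ i, a i ^ p := sum_nonneg fun i _ => Real.rpow_nonneg (ha i) _
  have hbq : 0 ≤ ∑ j, b j ^ q := sum_nonneg fun j _ => Real.rpow_nonneg (hb j) _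
  have row_bound : ∑ i, a i ^ p * ∑ j, A i j ≤ (∑ i, a i ^ p) * M := by
    rw [sum_mul]
    exact sum_le_sum fun i _ => mul_le_mul_of_nonneg_left (hrow i) (Real.rpow_nonneg (ha i) _)
  have col_bound : ∑ j, b j ^ q * ∑ i, A i j ≤ (∑ j, b j ^ q) * M := by
    rw [sum_mul]
    exact sum_le_sum fun j _ => mul_le_mul_of_nonneg_left (hcol j) (Real.rpow_nonneg (hb j) _)
  calc ∑ i, ∑ j, a i * b j * A i j
      ≤ (∑ i, a i ^ p * ∑ j, A i j) ^ (1 / p) * (∑ j, b j ^ q * ∑ i, A i j) ^ (1 / q) :=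
        Real.sum_sum_mul_mul_le_weighted_Lp_mul_Lq hpq ha hb hA
    _ ≤ ((∑ i, a i ^ p) * M) ^ (1 / p) * ((∑ j, b j ^ q) * M) ^ (1 / q) := by
        have hwp : 0 ≤ ∑ i, a i ^ p * ∑ j, A i j :=
          sum_nonneg fun i _ =>
            mul_nonneg (Real.rpow_nonneg (ha i) _) (sum_nonneg fun j _ => hA i j)
        have hwq : 0 ≤ ∑ j, b j ^ q * ∑ i, A i j :=
          sum_nonneg fun j _ =>
            mul_nonneg (Real.rpow_nonneg (hb j) _) (sum_nonneg fun i _ => hA i j)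
        exact mul_le_mul (Real.rpow_le_rpow hwp row_bound hp) (Real.rpow_le_rpow hwq col_bound hq)
          (Real.rpow_nonneg hwq _) (Real.rpow_nonneg (mul_nonneg hap hM) _)
    _ = (∑ i, a i ^ p) ^ (1 / p) * (∑ j, b j ^ q) ^ (1 / q) * M := by
        rw [Real.mul_rpow hap hM, Real.mul_rpow hbq hM, mul_mul_mul_comm,
          ← Real.rpow_add_of_nonneg hM hp hq, hpq.one_div_add_one_div, one_div_one, Real.rpow_one]

end SchurTest

section InnerProduct

variable {𝕜 E ι : Type*} [RCLike 𝕜] [NormedAddCommGroup E] [InnerProductSpace 𝕜 E] [Fintype ι]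

theorem norm_sum_smul_sq_le (c : ι → 𝕜) (y : ι → E) :
    ‖∑ i, c i • y i‖ ^ 2 ≤ ∑ i, ∑ j, ‖c i‖ * ‖c j‖ * ‖(inner 𝕜 (y i) (y j) : 𝕜)‖ := by
  calc ‖∑ i, c i • y i‖ ^ 2 = RCLike.re (inner 𝕜 (∑ i, c i • y i) (∑ i, c i • y i)) :=
        norm_sq_eq_re_inner _
    _ ≤ ‖(inner 𝕜 (∑ i, c i • y i) (∑ i, c i • y i) : 𝕜)‖ := RCLike.re_le_norm _
    _ = ‖∑ i, ∑ j, c j * ((starRingEnd 𝕜) (c i) * inner 𝕜 (y i) (y j))‖ := by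
        rw [sum_inner]
        simp only [inner_sum, inner_smul_left, inner_smul_right]
    _ ≤ ∑ i, ∑ j, ‖c i‖ * ‖c j‖ * ‖(inner 𝕜 (y i) (y j) : 𝕜)‖ :=
        (norm_sum_le _ _).trans <| sum_le_sum fun i _ => (norm_sum_le _ _).trans <|
          sum_le_sum fun j _ => by
            rw [norm_mul, norm_mul, RCLike.norm_conj, mul_left_comm, mul_assoc]

end InnerProduct

theorem stmt_13 {H : Type*} [NormedAddCommGroup H] [InnerProductSpace ℂ H]
    {n : ℕ} (hn : 0 < n) (x : H) (y : Fin n → H) (c : Fin n → ℂ) (p q : ℝ) (hp : 1 < p) (hpq : 1 / p + 1 / q = 1) :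
    ‖∑ i, c i * (inner ℂ x (y i) : ℂ)‖ ^ 2 ≤ ‖x‖ ^ 2 * (∑ i, ‖c i‖ ^ p) ^ (1 / p) * (∑ i, ‖c i‖ ^ q) ^ (1 / q) * (Finset.univ.sup' (Finset.univ_nonempty_iff.mpr (Fin.pos_iff_nonempty.mp hn)) (fun i => (∑ j, ‖(inner ℂ (y i) (y j) : ℂ)‖))) := by
  have hpq' : p.HolderConjugate q :=
    Real.holderConjugate_iff.mpr ⟨hp, by simpa only [one_div] using hpq⟩
  set M := Finset.univ.sup' (Finset.univ_nonempty_iff.mpr (Fin.pos_iff_nonempty.mp hn))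
    (fun i => (∑ j, ‖(inner ℂ (y i) (y j) : ℂ)‖))
  have hrow : ∀ i, ∑ j, ‖(inner ℂ (y i) (y j) : ℂ)‖ ≤ M := fun i =>
    le_sup' (fun i => ∑ j, ‖(inner ℂ (y i) (y j) : ℂ)‖) (mem_univ i)
  have hcol : ∀ j, ∑ i, ‖(inner ℂ (y i) (y j) : ℂ)‖ ≤ M := fun j => by
    simpa only [norm_inner_symm (y _) (y j)] using hrow j
  have hsum : ∑ i, c i * (inner ℂ x (y i) : ℂ) = inner ℂ x (∑ i, c i • y i) := by
    simp only [inner_sum, inner_smul_right]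
  calc ‖∑ i, c i * (inner ℂ x (y i) : ℂ)‖ ^ 2 ≤ ‖x‖ ^ 2 * ‖∑ i, c i • y i‖ ^ 2 := by
        rw [hsum, ← mul_pow]
        gcongr
        exact norm_inner_le_norm _ _
    _ ≤ ‖x‖ ^ 2 * ((∑ i, ‖c i‖ ^ p) ^ (1 / p) * (∑ i, ‖c i‖ ^ q) ^ (1 / q) * M) := by
        gcongr
        exact (norm_sum_smul_sq_le c y).trans <| Real.sum_sum_mul_mul_le_Lp_mul_Lq_mul hpq'
          (fun _ => norm_nonneg _) (fun _ => norm_nonneg _) (fun _ _ => norm_nonneg _) hrow hcol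
    _ = _ := by ring
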